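/- Let r_1 ≥ r_2 ≥ ... ≥ r_n > 0 with n ≥ 4, and place v_1 = (0,0,r_1), v_2 = (0,0,−r_2), and v_3, ..., v_n in the plane z = 0 at positions with ‖v_i‖ = r_i forming a convex polygon with the origin in its interior (assuming r_3, ..., r_n are pairwise distinct). Then the convex hull of {v_1, ..., v_n} contains the origin in its interior and each v_i is on its boundary. -/

import Mathlib

noncomputable def pt3 (x y z : ℝ) : EuclideanSpace ℝ (Fin 3) :=
  (WithLp.equiv 2 (Fin 3 → ℝ)).symm ![x, y, z]

noncomputable def pt2 (x y : ℝ) : EuclideanSpace ℝ (Fin 2) :=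
  (WithLp.equiv 2 (Fin 2 → ℝ)).symm ![x, y]

/-!
Identify `ℝ³` with `ℝ² × ℝ`; the hull of the `v i` becomes the double cone over the polygon
`K = conv w` with apexes `(0, r₀)` and `(0, -r₁)`. It contains `K × {0}` and both apexes, hence a
box around the origin. It is contained in `K × [-r₁, r₀]`, so no vertex `p` can be pushed outward
to `(1 + t) • p` without leaving it, as an interior point could: for an apex the height overshoots,
and for `(w, 0)` with `w ∈ ∂K`, `(1 + t) • w ∈ K` would put `w` on an open segment from a point
of `K` to the interior point `0`.
-/

open Set Topology

section Ray

variable {E : Type*} [AddCommGroup E] [TopologicalSpace E] [Module ℝ E]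

theorem Convex.smul_mem_interior_of_zero_mem_interior [IsTopologicalAddGroup E]
    [ContinuousSMul ℝ E] {K : Set E} (hK : Convex ℝ K) (h0 : (0 : E) ∈ interior K) {x : E}
    (hx : x ∈ K) {t : ℝ} (ht0 : 0 ≤ t) (ht1 : t < 1) : t • x ∈ interior K := by
  simpa using hK.combo_self_interior_mem_interior hx h0 ht0 (sub_pos.2 ht1) (by ring)

theorem exists_one_add_smul_mem_of_mem_interior [ContinuousSMul ℝ E] {S : Set E} {p : E}
    (hp : p ∈ interior S) : ∃ t : ℝ, 0 < t ∧ (1 + t) • p ∈ S := by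
  have hcont : Continuous fun t : ℝ => (1 + t) • p := by fun_prop
  have hS : ∀ᶠ t in 𝓝[>] (0 : ℝ), (1 + t) • p ∈ S := nhdsWithin_le_nhds <|
    hcont.continuousAt.preimage_mem_nhds (by simpa using mem_interior_iff_mem_nhds.1 hp)
  exact (eventually_mem_nhdsWithin.and hS).exists

end Ray

section DoubleCone

variable {E : Type*} [NormedAddCommGroup E] [NormedSpace ℝ E]

def doubleCone (s : Set E) (a b : ℝ) : Set (E × ℝ) :=
  convexHull ℝ (insert (0, a) (insert (0, -b) ((fun x => (x, 0)) '' s)))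

theorem mk_zero_mem_doubleCone {s : Set E} {x : E} (hx : x ∈ convexHull ℝ s) (a b : ℝ) :
    (x, 0) ∈ doubleCone s a b := by
  have hflat : (fun x => (x, 0)) '' convexHull ℝ s = convexHull ℝ ((fun x => (x, (0 : ℝ))) '' s) :=
    (LinearMap.inl ℝ E ℝ).image_convexHull s
  refine convexHull_mono ((subset_insert _ _).trans (subset_insert _ _)) ?_
  exact hflat ▸ mem_image_of_mem _ hx

theorem doubleCone_subset_prod {s : Set E} (h0 : (0 : E) ∈ convexHull ℝ s) {a b : ℝ}
    (ha : 0 ≤ a) (hb : 0 ≤ b) : doubleCone s a b ⊆ convexHull ℝ s ×ˢ Icc (-b) a := by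
  have hba : -b ≤ a := (neg_nonpos.2 hb).trans ha
  refine convexHull_min ?_ ((convex_convexHull ℝ s).prod (convex_Icc _ _))
  rintro _ (rfl | rfl | ⟨x, hx, rfl⟩)
  · exact ⟨h0, hba, le_rfl⟩
  · exact ⟨h0, le_rfl, hba⟩
  · exact ⟨subset_convexHull ℝ s hx, neg_nonpos.2 hb, ha⟩

theorem Convex.mk_mul_mem {C : Set (E × ℝ)} (hC : Convex ℝ C) {ε c t : ℝ}
    (hflat : ∀ x, ‖x‖ < ε → (x, 0) ∈ C) (hc : (0, c) ∈ C) (ht0 : 0 ≤ t) (ht : t ≤ 1 / 2)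
    {x : E} (hx : ‖x‖ < ε / 2) : (x, t * c) ∈ C := by
  have h1t : 0 < 1 - t := by linarith
  have hsplit : (x, t * c) = t • (0, c) + (1 - t) • ((1 - t)⁻¹ • x, (0 : ℝ)) := by
    ext <;> simp [smul_smul, mul_inv_cancel₀ h1t.ne']
  rw [hsplit]
  refine hC hc (hflat _ ?_) ht0 h1t.le (by ring)
  have hinv : (1 - t)⁻¹ ≤ 2 := by rw [inv_le_comm₀ h1t two_pos]; linarith
  calc ‖(1 - t)⁻¹ • x‖ = (1 - t)⁻¹ * ‖x‖ := by rw [norm_smul, Real.norm_of_nonneg (by positivity)]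
    _ ≤ 2 * ‖x‖ := by gcongr
    _ < ε := by linarith

theorem zero_mem_interior_doubleCone {s : Set E} (h0 : (0 : E) ∈ interior (convexHull ℝ s))
    {a b : ℝ} (ha : 0 < a) (hb : 0 < b) : (0 : E × ℝ) ∈ interior (doubleCone s a b) := by
  have hC : Convex ℝ (doubleCone s a b) := convex_convexHull ℝ _
  obtain ⟨ε, hε, hball⟩ := Metric.mem_nhds_iff.1 (mem_interior_iff_mem_nhds.1 h0)
  have hflat : ∀ x, ‖x‖ < ε → (x, 0) ∈ doubleCone s a b := fun x hx =>
    mk_zero_mem_doubleCone (hball (by simpa using hx)) a b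
  have htop : ((0 : E), a) ∈ doubleCone s a b := subset_convexHull ℝ _ (mem_insert _ _)
  have hbot : ((0 : E), -b) ∈ doubleCone s a b :=
    subset_convexHull ℝ _ (mem_insert_of_mem _ (mem_insert _ _))
  rw [mem_interior_iff_mem_nhds, Prod.zero_eq_mk, mem_nhds_prod_iff]
  refine ⟨Metric.ball 0 (ε / 2), Metric.ball_mem_nhds _ (by positivity),
    Ioo (-b / 2) (a / 2), Ioo_mem_nhds (by linarith) (by linarith), ?_⟩
  rintro ⟨x, z⟩ ⟨hx, hz, hz'⟩
  rw [mem_ball_zero_iff] at hx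
  rcases le_or_gt 0 z with hz0 | hz0
  · simpa [div_mul_cancel₀ z ha.ne'] using
      hC.mk_mul_mem hflat htop (t := z / a) (by positivity) (by rw [div_le_iff₀ ha]; linarith) hx
  · simpa [div_mul_cancel₀ z (neg_ne_zero.2 hb.ne')] using
      hC.mk_mul_mem hflat hbot (t := z / -b) (div_nonneg_of_nonpos hz0.le (by linarith))
        (by rw [div_le_iff_of_neg (by linarith)]; linarith) hx

theorem mem_frontier_doubleCone {s : Set E} (h0 : (0 : E) ∈ interior (convexHull ℝ s))
    (hs : ∀ x ∈ s, x ∈ frontier (convexHull ℝ s)) {a b : ℝ} (ha : 0 < a) (hb : 0 < b)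
    {p : E × ℝ} (hp : p ∈ insert (0, a) (insert (0, -b) ((fun x => (x, 0)) '' s))) :
    p ∈ frontier (doubleCone s a b) := by
  refine ⟨subset_closure (subset_convexHull ℝ _ hp), fun hint => ?_⟩
  obtain ⟨t, ht, hpt⟩ := exists_one_add_smul_mem_of_mem_interior hint
  have hbox := doubleCone_subset_prod (interior_subset h0) ha.le hb.le hpt
  rcases hp with rfl | rfl | ⟨x, hx, rfl⟩
  · have : (1 + t) * a ≤ a := by simpa using hbox.2.2
    nlinarith
  · have : -b ≤ (1 + t) * -b := by simpa using hbox.2.1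
    nlinarith
  · have hxint : (1 + t)⁻¹ • (1 + t) • x ∈ interior (convexHull ℝ s) :=
      (convex_convexHull ℝ s).smul_mem_interior_of_zero_mem_interior h0 (by simpa using hbox.1)
        (by positivity) (inv_lt_one_of_one_lt₀ (by linarith))
    rw [inv_smul_smul₀ (by positivity)] at hxint
    exact (hs x hx).2 hxint

end DoubleCone

theorem pt2_zero : pt2 0 0 = 0 := by
  ext i; fin_cases i <;> rfl

noncomputable def splitLastCoord :
    EuclideanSpace ℝ (Fin 3) ≃L[ℝ] EuclideanSpace ℝ (Fin 2) × ℝ :=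
  LinearEquiv.toContinuousLinearEquiv
    { toFun := fun p => (pt2 (p 0) (p 1), p 2)
      invFun := fun q => pt3 (q.1 0) (q.1 1) q.2
      map_add' := fun p q => by ext i <;> [fin_cases i; skip] <;> rfl
      map_smul' := fun c p => by ext i <;> [fin_cases i; skip] <;> rfl
      left_inv := fun p => by ext i; fin_cases i <;> rfl
      right_inv := fun q => by ext i <;> [fin_cases i; skip] <;> rfl }

theorem splitLastCoord_apply (p : EuclideanSpace ℝ (Fin 3)) :
    splitLastCoord p = (pt2 (p 0) (p 1), p 2) := rfl

theorem splitLastCoord_pt3 (x y z : ℝ) : splitLastCoord (pt3 x y z) = (pt2 x y, z) := rfl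

theorem stmt19 (n : ℕ) (hn : 4 ≤ n) (r : Fin n → ℝ)
    (hpos : ∀ i, 0 < r i)
    (v : Fin n → EuclideanSpace ℝ (Fin 3))
    (hv0 : v ⟨0, by omega⟩ = pt3 0 0 (r ⟨0, by omega⟩))
    (hv1 : v ⟨1, by omega⟩ = pt3 0 0 (-(r ⟨1, by omega⟩)))
    (hplane : ∀ i : Fin n, 2 ≤ i.val → v i 2 = 0)
    (w : {i : Fin n // 2 ≤ i.val} → EuclideanSpace ℝ (Fin 2))
    (hw : ∀ i : {i : Fin n // 2 ≤ i.val}, w i = pt2 (v i.val 0) (v i.val 1))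
    (hwbd : ∀ i, w i ∈ frontier (convexHull ℝ (Set.range w)))
    (hwint : (0 : EuclideanSpace ℝ (Fin 2)) ∈ interior (convexHull ℝ (Set.range w))) :
    (0 : EuclideanSpace ℝ (Fin 3)) ∈ interior (convexHull ℝ (Set.range v)) ∧
      ∀ i, v i ∈ frontier (convexHull ℝ (Set.range v)) := by
  set e := splitLastCoord
  have hgen : range (e ∘ v) = insert (0, r ⟨0, by omega⟩)
      (insert (0, -r ⟨1, by omega⟩) ((fun x => (x, 0)) '' range w)) := by
    ext p
    constructor
    · rintro ⟨⟨_ | _ | k, hk⟩, rfl⟩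
      · exact .inl (by simp [e, hv0, splitLastCoord_pt3, pt2_zero])
      · exact .inr (.inl (by simp [e, hv1, splitLastCoord_pt3, pt2_zero]))
      · refine .inr (.inr ⟨w ⟨⟨k + 2, hk⟩, le_add_self⟩, mem_range_self _, ?_⟩)
        simp [e, splitLastCoord_apply, hw, hplane ⟨k + 2, hk⟩ le_add_self]
    · rintro (rfl | rfl | ⟨_, ⟨⟨⟨k, hk⟩, hk2⟩, rfl⟩, rfl⟩)
      · exact ⟨⟨0, by omega⟩, by simp [e, hv0, splitLastCoord_pt3, pt2_zero]⟩
      · exact ⟨⟨1, by omega⟩, by simp [e, hv1, splitLastCoord_pt3, pt2_zero]⟩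
      · exact ⟨⟨k, hk⟩, by simp [e, splitLastCoord_apply, hw, hplane _ hk2]⟩
  have hhull : convexHull ℝ (range v) =
      e ⁻¹' doubleCone (range w) (r ⟨0, by omega⟩) (r ⟨1, by omega⟩) := by
    have himage : e '' convexHull ℝ (range v) = convexHull ℝ (e '' range v) :=
      e.toLinearEquiv.toLinearMap.image_convexHull _
    rw [doubleCone, ← hgen, range_comp, ← himage, preimage_image_eq _ e.injective]
  rw [hhull]
  refine ⟨(e.toHomeomorph.preimage_interior _).subset ?_,
    fun i => (e.toHomeomorph.preimage_frontier _).subset ?_⟩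
  · simpa using zero_mem_interior_doubleCone hwint (hpos _) (hpos _)
  · exact mem_frontier_doubleCone hwint (forall_mem_range.2 hwbd) (hpos _) (hpos _)
      (hgen ▸ mem_range_self i)
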